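/- arXiv:2509.20921 — 4 statements merged into one kernel-verified Lean document; each statement's English description precedes it below -/
import Mathlib

section
/- The identity map of (ℝ²_≤ ∖ Δ) ∪ {Δ} is a homeomorphism from the metric topology induced by d_rk to the metric topology induced by d_dim; that is, the metrics d_rk and d_dim induce the same topology on the quotient (ℝ²_≤ ∖ Δ) ∪ {Δ}. -/
/-!
Write `ℓ(x) = x₂ - x₁` and `o(x, y)` for the length of `[x₁, x₂] ∩ [y₁, y₂]`, so that
`d_dim = ℓ(x) + ℓ(y) - 2 o` and `d_rk = ℓ(x)²/2 + ℓ(y)²/2 - o²`; the diagonal behaves like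
the empty interval. Since `0 ≤ o ≤ min ℓ(x) ℓ(y)`, one has `d_dim² ≤ 4 d_rk`, so small
`d_rk`-balls lie in `d_dim`-balls. Conversely `ℓ` and `o(x, ·)` are `1`-Lipschitz for
`d_dim` (it is the measure of a symmetric difference), so `d_rk(x, ·)` is locally Lipschitz
for `d_dim`, and small `d_dim`-balls lie in `d_rk`-balls.
-/

open scoped Classical ENNReal
open MeasureTheory Filter

noncomputable section

/-- Off-diagonal points of `ℝ²_≤`. -/
abbrev Pt : Type := {p : ℝ × ℝ // p.1 < p.2}

/-- The quotient `(ℝ²_≤ ∖ Δ) ∪ {Δ}`: the diagonal is collapsed to the single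
point `none`. -/
abbrev PtD : Type := Option Pt

/-- The rank "distance" formula on `ℝ²_≤`. -/
def drk (x y : ℝ × ℝ) : ℝ :=
  (x.2 - x.1) ^ 2 / 2 + (y.2 - y.1) ^ 2 / 2 - (max (min x.2 y.2 - max x.1 y.1) 0) ^ 2

/-- The dimension "distance" formula on `ℝ²_≤` (length of the symmetric
difference of the intervals `[x₁,x₂]` and `[y₁,y₂]`). -/
def ddim (x y : ℝ × ℝ) : ℝ :=
  (x.2 - x.1) + (y.2 - y.1) - 2 * max (min x.2 y.2 - max x.1 y.1) 0

/-- `d_rk` on the quotient `(ℝ²_≤ ∖ Δ) ∪ {Δ}`, with `d_rk(x,Δ) = ½(x₂−x₁)²`. -/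
def drkQ : PtD → PtD → ℝ
  | Option.some x, Option.some y => drk x.1 y.1
  | Option.some x, Option.none => (x.1.2 - x.1.1) ^ 2 / 2
  | Option.none, Option.some y => (y.1.2 - y.1.1) ^ 2 / 2
  | Option.none, Option.none => 0

/-- `d_dim` on the quotient `(ℝ²_≤ ∖ Δ) ∪ {Δ}`, with `d_dim(x,Δ) = x₂−x₁`. -/
def ddimQ : PtD → PtD → ℝ
  | Option.some x, Option.some y => ddim x.1 y.1
  | Option.some x, Option.none => x.1.2 - x.1.1
  | Option.none, Option.some y => y.1.2 - y.1.1
  | Option.none, Option.none => 0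

/-- The topology on the quotient `(ℝ²_≤ ∖ Δ) ∪ {Δ}` generated by the open balls
of a distance function. -/
def topOf (dist : PtD → PtD → ℝ) : TopologicalSpace PtD :=
  TopologicalSpace.generateFrom {B : Set PtD | ∃ x r, B = {y | dist x y < r}}

def overlap (x y : ℝ × ℝ) : ℝ := max (min x.2 y.2 - max x.1 y.1) 0

section Intervals

variable {x y z : ℝ × ℝ}

lemma overlap_nonneg (x y : ℝ × ℝ) : 0 ≤ overlap x y := le_max_right _ _

lemma overlap_comm (x y : ℝ × ℝ) : overlap x y = overlap y x := by
  simp only [overlap, min_comm, max_comm]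

lemma overlap_le_left (hx : x.1 ≤ x.2) (y : ℝ × ℝ) : overlap x y ≤ x.2 - x.1 :=
  max_le (by linarith [min_le_left x.2 y.2, le_max_left x.1 y.1]) (by linarith)

lemma overlap_le_right (x : ℝ × ℝ) (hy : y.1 ≤ y.2) : overlap x y ≤ y.2 - y.1 :=
  overlap_comm x y ▸ overlap_le_left hy x

lemma overlap_self (hx : x.1 ≤ x.2) : overlap x x = x.2 - x.1 := by
  simp [overlap, hx]

lemma overlap_add_overlap_le (x : ℝ × ℝ) (hy : y.1 ≤ y.2) (z : ℝ × ℝ) :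
    overlap x y + overlap y z ≤ y.2 - y.1 + overlap x z := by
  simp only [overlap, max_def, min_def]
  split_ifs <;> linarith

lemma ddim_eq (x y : ℝ × ℝ) : ddim x y = x.2 - x.1 + (y.2 - y.1) - 2 * overlap x y := rfl

lemma drk_eq (x y : ℝ × ℝ) :
    drk x y = (x.2 - x.1) ^ 2 / 2 + (y.2 - y.1) ^ 2 / 2 - overlap x y ^ 2 := rfl

lemma ddim_self (hx : x.1 ≤ x.2) : ddim x x = 0 := by
  rw [ddim_eq, overlap_self hx]; ring

lemma drk_self (hx : x.1 ≤ x.2) : drk x x = 0 := by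
  rw [drk_eq, overlap_self hx]; ring

lemma ddim_nonneg (hx : x.1 ≤ x.2) (hy : y.1 ≤ y.2) : 0 ≤ ddim x y := by
  linarith [ddim_eq x y, overlap_le_left hx y, overlap_le_right x hy]

lemma ddim_triangle (x : ℝ × ℝ) (hy : y.1 ≤ y.2) (z : ℝ × ℝ) :
    ddim x z ≤ ddim x y + ddim y z := by
  simp only [ddim_eq]
  linarith [overlap_add_overlap_le x hy z]

lemma abs_sub_length_le_ddim (hy : y.1 ≤ y.2) (hz : z.1 ≤ z.2) :
    |(z.2 - z.1) - (y.2 - y.1)| ≤ ddim y z := by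
  rw [abs_le, ddim_eq]
  constructor <;> linarith [overlap_le_left hy z, overlap_le_right y hz]

lemma abs_overlap_sub_overlap_le_ddim (x : ℝ × ℝ) (hy : y.1 ≤ y.2) (hz : z.1 ≤ z.2) :
    |overlap x z - overlap x y| ≤ ddim y z := by
  rw [abs_le, ddim_eq]
  constructor
  · linarith [overlap_add_overlap_le x hy z, overlap_le_right y hz]
  · linarith [overlap_add_overlap_le x hz y, overlap_comm z y, overlap_le_left hy z]

lemma sq_ddim_le_four_mul_drk (hx : x.1 ≤ x.2) (hy : y.1 ≤ y.2) :
    ddim x y ^ 2 ≤ 4 * drk x y := by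
  have ho := overlap_nonneg x y
  have hox := overlap_le_left hx y
  have hoy := overlap_le_right x hy
  rw [ddim_eq, drk_eq]
  -- `4 drk - ddim² = (ℓx - ℓy)² + 4o(ℓx - o) + 4o(ℓy - o)`
  nlinarith [sq_nonneg ((x.2 - x.1) - (y.2 - y.1)),
    mul_nonneg ho (sub_nonneg.2 hox), mul_nonneg ho (sub_nonneg.2 hoy)]

lemma drk_le_drk_add_mul_ddim (hx : x.1 ≤ x.2) (hy : y.1 ≤ y.2) (hz : z.1 ≤ z.2)
    (hyz : ddim y z ≤ 1) :
    drk x z ≤ drk x y + (2 * (x.2 - x.1) + 2 * (y.2 - y.1) + 1) * ddim y z := by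
  have hlen := abs_le.1 (abs_sub_length_le_ddim hy hz)
  have hovl := abs_le.1 (abs_overlap_sub_overlap_le_ddim x hy hz)
  have hd := ddim_nonneg hy hz
  have hpy := overlap_nonneg x y
  have hpz := overlap_nonneg x z
  have hpy' := overlap_le_left hx y
  have hpz' := overlap_le_left hx z
  rw [drk_eq, drk_eq]
  nlinarith [mul_nonneg hd (by linarith : 0 ≤ 2 * (x.2 - x.1) - overlap x y - overlap x z),
    mul_nonneg hd (by linarith : 0 ≤ (y.2 - y.1) + (z.2 - z.1)),
    mul_nonneg hd (sub_nonneg.2 hyz)]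

end Intervals

def toInterval : PtD → ℝ × ℝ
  | some p => p.1
  | none => (0, 0)

lemma toInterval_fst_le (a : PtD) : (toInterval a).1 ≤ (toInterval a).2 := by
  cases a with
  | none => simp [toInterval]
  | some p => exact p.2.le

lemma overlap_zero_right (x : ℝ × ℝ) : overlap x (0, 0) = 0 :=
  max_eq_right (by linarith [min_le_right x.2 0, le_max_right x.1 0])

lemma drkQ_eq_drk (a b : PtD) : drkQ a b = drk (toInterval a) (toInterval b) := by
  cases a <;> cases b <;>
    simp [drkQ, drk_eq, toInterval, overlap_zero_right, overlap_comm (0, 0)]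

lemma ddimQ_eq_ddim (a b : PtD) : ddimQ a b = ddim (toInterval a) (toInterval b) := by
  cases a <;> cases b <;>
    simp [ddimQ, ddim_eq, toInterval, overlap_zero_right, overlap_comm (0, 0)]

lemma topOf_le_topOf {d₁ d₂ : PtD → PtD → ℝ} (hself : ∀ y, d₁ y y = 0)
    (hball : ∀ x y r, d₂ x y < r → ∃ ε > 0, ∀ z, d₁ y z < ε → d₂ x z < r) :
    topOf d₁ ≤ topOf d₂ := by
  refine le_generateFrom ?_
  rintro _ ⟨x, r, rfl⟩
  let := topOf d₁
  refine isOpen_iff_forall_mem_open.2 fun y hy => ?_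
  obtain ⟨ε, hε, hsub⟩ := hball x y r hy
  exact ⟨{z | d₁ y z < ε}, hsub, .basic _ ⟨y, ε, rfl⟩, by simpa [hself y] using hε⟩

lemma topOf_drkQ_le_topOf_ddimQ : topOf drkQ ≤ topOf ddimQ := by
  refine topOf_le_topOf (fun y => by simp [drkQ_eq_drk, drk_self (toInterval_fst_le y)]) ?_
  intro x y r hr
  refine ⟨(r - ddimQ x y) ^ 2 / 4, by nlinarith, fun z hz => ?_⟩
  simp only [ddimQ_eq_ddim, drkQ_eq_drk] at hr hz ⊢
  have hyz : ddim (toInterval y) (toInterval z) < r - ddim (toInterval x) (toInterval y) :=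
    lt_of_pow_lt_pow_left₀ 2 (by linarith) <| by
      linarith [sq_ddim_le_four_mul_drk (toInterval_fst_le y) (toInterval_fst_le z)]
  linarith [ddim_triangle (toInterval x) (toInterval_fst_le y) (toInterval z)]

lemma topOf_ddimQ_le_topOf_drkQ : topOf ddimQ ≤ topOf drkQ := by
  refine topOf_le_topOf (fun y => by simp [ddimQ_eq_ddim, ddim_self (toInterval_fst_le y)]) ?_
  intro x y r hr
  simp only [drkQ_eq_drk, ddimQ_eq_ddim] at hr ⊢
  set X := toInterval x
  set Y := toInterval y
  set C := 2 * (X.2 - X.1) + 2 * (Y.2 - Y.1) + 1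
  have hC : 0 < C := by linarith [toInterval_fst_le x, toInterval_fst_le y]
  refine ⟨min 1 ((r - drk X Y) / C), lt_min one_pos (div_pos (by linarith) hC), fun z hz => ?_⟩
  have hz1 := hz.trans_le (min_le_left _ _)
  have hzC := (lt_div_iff₀ hC).1 (hz.trans_le (min_le_right _ _))
  linarith [drk_le_drk_add_mul_ddim (toInterval_fst_le x) (toInterval_fst_le y)
    (toInterval_fst_le z) hz1.le]

/-- The metrics `d_rk` and `d_dim` induce the same topology on the quotient
`(ℝ²_≤ ∖ Δ) ∪ {Δ}`; i.e., the identity map is a homeomorphism between the two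
metric topologies. -/
theorem stmt3 : topOf drkQ = topOf ddimQ :=
  le_antisymm topOf_drkQ_le_topOf_ddimQ topOf_ddimQ_le_topOf_drkQ

end
end

section
/- Let α, β, σ, τ, γ, η be finite persistence diagrams and let d be a metric on (ℝ²_≤ ∖ Δ) ∪ {Δ}. Then W₁^d(α + γ, β + σ) + W₁^d(τ + σ, η + γ) ≥ W₁^d(α + τ, β + η), where + denotes multiset sum of diagrams. -/
open scoped Classical ENNReal
open MeasureTheory Filter

noncomputable section

/-- The cost of the coupling between finite diagrams `α` and `β` determined by
the multiset `m` of matched pairs: matched pairs pay `d` between themselves,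
and every unmatched point of `α` or `β` is matched with the diagonal `Δ`. -/
def cost (d : PtD → PtD → ℝ) (α β : Multiset Pt) (m : Multiset (Pt × Pt)) : ℝ :=
  (m.map fun p => d (some p.1) (some p.2)).sum
    + ((α - m.map Prod.fst).map fun x => d (some x) none).sum
    + ((β - m.map Prod.snd).map fun y => d none (some y)).sum

/-- The 1-Wasserstein distance between finite persistence diagrams with ground
metric `d`: the infimum of the costs of all couplings. -/
def W1fin (d : PtD → PtD → ℝ) (α β : Multiset Pt) : ℝ :=
  sInf {c : ℝ | ∃ m : Multiset (Pt × Pt),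
    m.map Prod.fst ≤ α ∧ m.map Prod.snd ≤ β ∧ c = cost d α β m}

/-- The tent function `tent_x(t) = max(0, min(t−x₁, x₂−t))`. -/
def tent (x : Pt) (t : ℝ) : ℝ := max 0 (min (t - x.1.1) (x.1.2 - t))

/-- The persistence landscape `λ_α(k,t)`: the `k`-th largest element of the
multiset `{tent_x(t) : x ∈ α}` (and `0` if `α` has fewer than `k` elements). -/
def landscape (α : Multiset Pt) (k : ℕ) (t : ℝ) : ℝ :=
  sSup {h : ℝ | 0 < h ∧ k ≤ Multiset.card (α.filter fun x => h ≤ tent x t)}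

/-- `‖Λα − Λβ‖₁ = ∑_{k ≥ 1} ∫ |λ_α(k,t) − λ_β(k,t)| dt`. -/
def lambdaDistFin (α β : Multiset Pt) : ℝ :=
  ∑' k : ℕ, ∫ t : ℝ, |landscape α (k + 1) t - landscape β (k + 1) t|

/-! Gluing optimal couplings of `α + γ` with `β + σ` and of `τ + σ` with `η + γ` gives a
coupling of `(α + τ) + (γ + σ)` with `(β + η) + (γ + σ)`, so it suffices to show that adding a
common point `x` to both diagrams cannot decrease `W₁`. Take an optimal coupling of `x + α`
with `x + β` and remove `x`: a pair `(x, x)` is simply dropped; otherwise `x` is matched with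
some `u` on one side and some `v` on the other (points or `Δ`), and matching `u` directly with
`v` costs no more, by the triangle inequality. Optimal couplings exist because finite diagrams
have only finitely many couplings. -/

namespace Multiset

variable {A B : Type*}

lemma exists_cons_of_cons_le {a : A} {s t : Multiset A} (h : a ::ₘ s ≤ t) :
    ∃ t', t = a ::ₘ t' ∧ s ≤ t' := by
  obtain ⟨u, rfl⟩ := le_iff_exists_add.1 h
  exact ⟨s + u, cons_add a s u, le_add_right s u⟩

lemma le_product_of_map_le {m : Multiset (A × B)} {s : Multiset A} {t : Multiset B}
    (hs : m.map Prod.fst ≤ s) (ht : m.map Prod.snd ≤ t) : m ≤ s ×ˢ t := by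
  induction m using Multiset.induction_on generalizing s t with
  | empty => exact zero_le _
  | cons p m ih =>
    obtain ⟨s', rfl, hs'⟩ := exists_cons_of_cons_le (by simpa using hs)
    obtain ⟨t', rfl, ht'⟩ := exists_cons_of_cons_le (by simpa using ht)
    rw [cons_product, product_cons, map_cons, cons_add, cons_le_cons_iff]
    exact (ih hs' ht').trans ((le_add_left _ _).trans (le_add_left _ _))

end Multiset

def IsCoupling (α β : Multiset Pt) (m : Multiset (Pt × Pt)) : Prop :=
  m.map Prod.fst ≤ α ∧ m.map Prod.snd ≤ β

lemma isCoupling_cons_cons_iff {α β : Multiset Pt} {m : Multiset (Pt × Pt)} {a b : Pt} :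
    IsCoupling (a ::ₘ α) (b ::ₘ β) ((a, b) ::ₘ m) ↔ IsCoupling α β m := by
  simp [IsCoupling]

lemma IsCoupling.add {α α' β β' : Multiset Pt} {m m' : Multiset (Pt × Pt)}
    (hm : IsCoupling α β m) (hm' : IsCoupling α' β' m') :
    IsCoupling (α + α') (β + β') (m + m') := by
  simpa [IsCoupling, Multiset.map_add] using ⟨add_le_add hm.1 hm'.1, add_le_add hm.2 hm'.2⟩

lemma finite_setOf_isCoupling (α β : Multiset Pt) : {m | IsCoupling α β m}.Finite :=
  (Multiset.finite_toSet (α ×ˢ β).powerset).subset fun _ hm =>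
    Multiset.mem_powerset.2 (Multiset.le_product_of_map_le hm.1 hm.2)

section Cost

variable {d : PtD → PtD → ℝ} {α β : Multiset Pt} {m : Multiset (Pt × Pt)}

lemma cost_cons_cons (a b : Pt) :
    cost d (a ::ₘ α) (b ::ₘ β) ((a, b) ::ₘ m) = d (some a) (some b) + cost d α β m := by
  simp only [cost, Multiset.map_cons, Multiset.sum_cons]
  simp only [← Multiset.singleton_add, add_tsub_add_eq_tsub_left]
  ring

lemma cost_cons_left (h : m.map Prod.fst ≤ α) (a : Pt) :
    cost d (a ::ₘ α) β m = d (some a) none + cost d α β m := by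
  simp only [cost, Multiset.cons_sub_of_le a h, Multiset.map_cons, Multiset.sum_cons]
  ring

lemma cost_cons_right (h : m.map Prod.snd ≤ β) (b : Pt) :
    cost d α (b ::ₘ β) m = d none (some b) + cost d α β m := by
  simp only [cost, Multiset.cons_sub_of_le b h, Multiset.map_cons, Multiset.sum_cons]
  ring

lemma cost_add {α' β' : Multiset Pt} {m' : Multiset (Pt × Pt)}
    (hm : IsCoupling α β m) (hm' : IsCoupling α' β' m') :
    cost d (α + α') (β + β') (m + m') = cost d α β m + cost d α' β' m' := by
  simp only [cost, Multiset.map_add, ← tsub_add_tsub_comm hm.1 hm'.1,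
    ← tsub_add_tsub_comm hm.2 hm'.2, Multiset.sum_add]
  ring

end Cost

section W1fin

variable {d : PtD → PtD → ℝ} {α β : Multiset Pt} {m : Multiset (Pt × Pt)}

lemma W1fin_eq_sInf_image :
    W1fin d α β = sInf (cost d α β '' {m | IsCoupling α β m}) := by
  simp only [W1fin, IsCoupling, Set.image, Set.mem_ofPred_eq, and_assoc, eq_comm]

lemma W1fin_le_cost (hm : IsCoupling α β m) : W1fin d α β ≤ cost d α β m := by
  rw [W1fin_eq_sInf_image]
  exact csInf_le ((finite_setOf_isCoupling α β).image _).bddBelow ⟨m, hm, rfl⟩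

lemma exists_isCoupling_W1fin_eq_cost (d : PtD → PtD → ℝ) (α β : Multiset Pt) :
    ∃ m, IsCoupling α β m ∧ W1fin d α β = cost d α β m := by
  have hne : (cost d α β '' {m | IsCoupling α β m}).Nonempty :=
    ⟨_, 0, by simp [IsCoupling], rfl⟩
  obtain ⟨m, hm, hcost⟩ := hne.csInf_mem ((finite_setOf_isCoupling α β).image _)
  exact ⟨m, hm, by rw [W1fin_eq_sInf_image, hcost]⟩

lemma W1fin_add_add_le (α' β' : Multiset Pt) :
    W1fin d (α + α') (β + β') ≤ W1fin d α β + W1fin d α' β' := by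
  obtain ⟨m, hm, hW⟩ := exists_isCoupling_W1fin_eq_cost d α β
  obtain ⟨m', hm', hW'⟩ := exists_isCoupling_W1fin_eq_cost d α' β'
  rw [hW, hW', ← cost_add hm hm']
  exact W1fin_le_cost (hm.add hm')

end W1fin

section Cancellation

variable {d : PtD → PtD → ℝ} {α β : Multiset Pt} {m : Multiset (Pt × Pt)} {x : Pt}

lemma W1fin_le_cost_of_self_mem (hdiag : ∀ u, d u u = 0)
    (hm : IsCoupling (x ::ₘ α) (x ::ₘ β) m) (hxx : (x, x) ∈ m) :
    W1fin d α β ≤ cost d (x ::ₘ α) (x ::ₘ β) m := by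
  obtain ⟨m, rfl⟩ := Multiset.exists_cons_of_mem hxx
  rw [cost_cons_cons, hdiag, zero_add]
  exact W1fin_le_cost (isCoupling_cons_cons_iff.1 hm)

lemma W1fin_le_cost_of_notMem (hdiag : ∀ u, d u u = 0)
    (htri : ∀ u v w, d u w ≤ d u v + d v w) (hm : IsCoupling (x ::ₘ α) (x ::ₘ β) m)
    (hx₁ : x ∉ m.map Prod.fst) (hx₂ : x ∉ m.map Prod.snd) :
    W1fin d α β ≤ cost d (x ::ₘ α) (x ::ₘ β) m := by
  have hα := (Multiset.le_cons_of_notMem hx₁).1 hm.1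
  have hβ := (Multiset.le_cons_of_notMem hx₂).1 hm.2
  rw [cost_cons_left hα, cost_cons_right hβ]
  linarith [htri (some x) none (some x), hdiag (some x), W1fin_le_cost (d := d) ⟨hα, hβ⟩]

lemma W1fin_le_cost_of_mem_snd (htri : ∀ u v w, d u w ≤ d u v + d v w)
    (hm : IsCoupling (x ::ₘ α) (x ::ₘ β) m) {z : Pt} (hzx : (z, x) ∈ m)
    (hx : x ∉ m.map Prod.fst) :
    W1fin d α β ≤ cost d (x ::ₘ α) (x ::ₘ β) m := by
  obtain ⟨m, rfl⟩ := Multiset.exists_cons_of_mem hzx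
  obtain ⟨α, rfl, hα⟩ := Multiset.exists_cons_of_cons_le
    (show z ::ₘ m.map Prod.fst ≤ α by simpa using (Multiset.le_cons_of_notMem hx).1 hm.1)
  have hβ : m.map Prod.snd ≤ β := by simpa using hm.2
  rw [Multiset.cons_swap, cost_cons_cons, cost_cons_left hα]
  calc W1fin d (z ::ₘ α) β
      ≤ cost d (z ::ₘ α) β m := W1fin_le_cost ⟨hα.trans (Multiset.le_cons_self _ _), hβ⟩
    _ = d (some z) none + cost d α β m := cost_cons_left hα z
    _ ≤ _ := by linarith [htri (some z) (some x) none]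

lemma W1fin_le_cost_of_mem_fst (htri : ∀ u v w, d u w ≤ d u v + d v w)
    (hm : IsCoupling (x ::ₘ α) (x ::ₘ β) m) {y : Pt} (hxy : (x, y) ∈ m)
    (hx : x ∉ m.map Prod.snd) :
    W1fin d α β ≤ cost d (x ::ₘ α) (x ::ₘ β) m := by
  obtain ⟨m, rfl⟩ := Multiset.exists_cons_of_mem hxy
  obtain ⟨β, rfl, hβ⟩ := Multiset.exists_cons_of_cons_le
    (show y ::ₘ m.map Prod.snd ≤ β by simpa using (Multiset.le_cons_of_notMem hx).1 hm.2)
  have hα : m.map Prod.fst ≤ α := by simpa using hm.1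
  rw [Multiset.cons_swap x y, cost_cons_cons, cost_cons_right hβ]
  calc W1fin d α (y ::ₘ β)
      ≤ cost d α (y ::ₘ β) m := W1fin_le_cost ⟨hα, hβ.trans (Multiset.le_cons_self _ _)⟩
    _ = d none (some y) + cost d α β m := cost_cons_right hβ y
    _ ≤ _ := by linarith [htri none (some x) (some y)]

lemma W1fin_le_cost_of_mem_fst_of_mem_snd (htri : ∀ u v w, d u w ≤ d u v + d v w)
    (hm : IsCoupling (x ::ₘ α) (x ::ₘ β) m) (hxx : (x, x) ∉ m) {y z : Pt}
    (hxy : (x, y) ∈ m) (hzx : (z, x) ∈ m) :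
    W1fin d α β ≤ cost d (x ::ₘ α) (x ::ₘ β) m := by
  obtain ⟨m, rfl⟩ := Multiset.exists_cons_of_mem hxy
  have hzx : (z, x) ∈ m := by
    refine (Multiset.mem_cons.1 hzx).resolve_left fun h => hxx ?_
    obtain ⟨rfl, rfl⟩ := Prod.mk.inj h
    exact hxy
  obtain ⟨m, rfl⟩ := Multiset.exists_cons_of_mem hzx
  obtain ⟨α, rfl, hα⟩ := Multiset.exists_cons_of_cons_le
    (show z ::ₘ m.map Prod.fst ≤ α by simpa using hm.1)
  obtain ⟨β, rfl, hβ⟩ := Multiset.exists_cons_of_cons_le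
    (show y ::ₘ m.map Prod.snd ≤ β by simpa [Multiset.cons_swap y x] using hm.2)
  rw [Multiset.cons_swap x y, cost_cons_cons, cost_cons_cons]
  calc W1fin d (z ::ₘ α) (y ::ₘ β)
      ≤ cost d (z ::ₘ α) (y ::ₘ β) ((z, y) ::ₘ m) :=
        W1fin_le_cost (isCoupling_cons_cons_iff.2 ⟨hα, hβ⟩)
    _ = d (some z) (some y) + cost d α β m := cost_cons_cons z y
    _ ≤ _ := by linarith [htri (some z) (some x) (some y)]

lemma W1fin_le_cons_cons (hdiag : ∀ u, d u u = 0) (htri : ∀ u v w, d u w ≤ d u v + d v w)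
    (α β : Multiset Pt) (x : Pt) : W1fin d α β ≤ W1fin d (x ::ₘ α) (x ::ₘ β) := by
  obtain ⟨m, hm, hW⟩ := exists_isCoupling_W1fin_eq_cost d (x ::ₘ α) (x ::ₘ β)
  rw [hW]
  by_cases hxx : (x, x) ∈ m
  · exact W1fin_le_cost_of_self_mem hdiag hm hxx
  by_cases hx₁ : x ∈ m.map Prod.fst <;> by_cases hx₂ : x ∈ m.map Prod.snd
  · obtain ⟨⟨_, y⟩, hxy, rfl⟩ := Multiset.mem_map.1 hx₁
    obtain ⟨⟨z, _⟩, hzx, rfl⟩ := Multiset.mem_map.1 hx₂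
    exact W1fin_le_cost_of_mem_fst_of_mem_snd htri hm hxx hxy hzx
  · obtain ⟨⟨_, y⟩, hxy, rfl⟩ := Multiset.mem_map.1 hx₁
    exact W1fin_le_cost_of_mem_fst htri hm hxy hx₂
  · obtain ⟨⟨z, _⟩, hzx, rfl⟩ := Multiset.mem_map.1 hx₂
    exact W1fin_le_cost_of_mem_snd htri hm hzx hx₁
  · exact W1fin_le_cost_of_notMem hdiag htri hm hx₁ hx₂

lemma W1fin_le_add_add (hdiag : ∀ u, d u u = 0) (htri : ∀ u v w, d u w ≤ d u v + d v w)
    (α β μ : Multiset Pt) : W1fin d α β ≤ W1fin d (α + μ) (β + μ) := by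
  induction μ using Multiset.induction_on with
  | empty => simp
  | cons x μ ih =>
    rw [Multiset.add_cons, Multiset.add_cons]
    exact ih.trans (W1fin_le_cons_cons hdiag htri _ _ x)

end Cancellation

theorem stmt11_general (d : PtD → PtD → ℝ)
    (hdeq : ∀ u v : PtD, d u v = 0 ↔ u = v)
    (hdtri : ∀ u v w : PtD, d u w ≤ d u v + d v w)
    (α β σ τ γ η : Multiset Pt) :
    W1fin d (α + τ) (β + η) ≤ W1fin d (α + γ) (β + σ) + W1fin d (τ + σ) (η + γ) :=
  calc W1fin d (α + τ) (β + η)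
      ≤ W1fin d (α + τ + (γ + σ)) (β + η + (γ + σ)) :=
        W1fin_le_add_add (fun u => (hdeq u u).2 rfl) hdtri _ _ _
    _ = W1fin d (α + γ + (τ + σ)) (β + σ + (η + γ)) := by congr 1 <;> abel
    _ ≤ W1fin d (α + γ) (β + σ) + W1fin d (τ + σ) (η + γ) := W1fin_add_add_le _ _

/-- For finite persistence diagrams `α, β, σ, τ, γ, η` and a metric `d`:
`W₁^d(α + γ, β + σ) + W₁^d(τ + σ, η + γ) ≥ W₁^d(α + τ, β + η)`. -/
theorem stmt11 (d : PtD → PtD → ℝ)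
    (hd0 : ∀ u v : PtD, 0 ≤ d u v)
    (hdsymm : ∀ u v : PtD, d u v = d v u)
    (hdeq : ∀ u v : PtD, d u v = 0 ↔ u = v)
    (hdtri : ∀ u v w : PtD, d u w ≤ d u v + d v w)
    (α β σ τ γ η : Multiset Pt) :
    W1fin d (α + τ) (β + η) ≤ W1fin d (α + γ) (β + σ) + W1fin d (τ + σ) (η + γ) :=
  stmt11_general d hdeq hdtri α β σ τ γ η

end
end

section
/- Let d be a metric on (ℝ²_≤ ∖ Δ) ∪ {Δ}, and let α, β be countable persistence diagrams with W₁^d(α,0) < ∞ and W₁^d(β,0) < ∞, where 0 denotes the empty diagram. If β ≤ α as multisets (every point of β occurs in α with at least the same multiplicity), then W₁^d(α, β) = W₁^d(α − β, 0) = W₁^d(α, 0) − W₁^d(β, 0), where α − β denotes the multiset difference. -/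
open scoped Classical ENNReal
open MeasureTheory Filter

noncomputable section

/-- A countable persistence diagram: a countable family of points, where `none`
entries represent no point (equivalently, copies of the diagonal `Δ`, which is
the base point of the quotient). The empty diagram is `fun _ => none`. -/
abbrev Diagram : Type := ℕ → PtD

/-- Pad a countable diagram with countably many copies of the diagonal, so that
partial matchings between two diagrams become bijections of the padded index
sets. -/
def pad (α : Diagram) : ℕ ⊕ ℕ → PtD
  | Sum.inl i => α i
  | Sum.inr _ => none

/-- The 1-Wasserstein distance between countable persistence diagrams with
ground metric `d`: the infimum over all couplings (= bijections of the padded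
diagrams; unmatched points are matched with the diagonal) of the possibly
infinite total cost. -/
def W1c (d : PtD → PtD → ℝ) (α β : Diagram) : ℝ≥0∞ :=
  ⨅ e : (ℕ ⊕ ℕ) ≃ (ℕ ⊕ ℕ), ∑' i : ℕ ⊕ ℕ, ENNReal.ofReal (d (pad α i) (pad β (e i)))

/-- The tent function of a (possibly diagonal) point. -/
def tentD : PtD → ℝ → ℝ
  | Option.some x, t => max 0 (min (t - x.1.1) (x.1.2 - t))
  | Option.none, _ => 0

/-- The persistence landscape `λ_α(k,t)` of a countable diagram: the `k`-th
largest element of the multiset `{tent_x(t) : x ∈ α}` (and `0` if `α` has fewer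
than `k` points). -/
def landC (α : Diagram) (k : ℕ) (t : ℝ) : ℝ :=
  sSup {h : ℝ | 0 < h ∧ ∃ s : Finset ℕ, k ≤ s.card ∧ ∀ i ∈ s, h ≤ tentD (α i) t}

/-- `‖Λα‖₁ = ∑_{k ≥ 1} ∫ λ_α(k,t) dt`, valued in `[0,∞]`. -/
def lambdaNormC (α : Diagram) : ℝ≥0∞ :=
  ∑' k : ℕ, ∫⁻ t : ℝ, ENNReal.ofReal (landC α (k + 1) t)

/-- `‖Λα − Λβ‖₁ = ∑_{k ≥ 1} ∫ |λ_α(k,t) − λ_β(k,t)| dt`, valued in `[0,∞]`. -/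
def lambdaDistC (α β : Diagram) : ℝ≥0∞ :=
  ∑' k : ℕ, ∫⁻ t : ℝ, ENNReal.ofReal |landC α (k + 1) t - landC β (k + 1) t|

/-- The empty diagram. -/
def emptyDiagram : Diagram := fun _ => none

/-- The multiset difference `α − β` of countable diagrams, where `β` is
realized as a sub-multiset of `α` via the injection `ι` on the indices of the
actual points of `β`: the points of `α` hit by `ι` are removed. -/
def diffDiagram (α β : Diagram) (ι : ℕ → ℕ) : Diagram :=
  fun j => if ∃ i, β i ≠ none ∧ ι i = j then none else α j


/-!
Matching every point of `β` with its copy in `α` and all remaining points of `α` with the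
diagonal is a coupling of cost `W₁(α − β, 0)`, so `W₁(α, β) ≤ W₁(α − β, 0)`. Conversely, the
triangle inequality through the diagonal gives `W₁(α, 0) ≤ W₁(α, β) + W₁(β, 0)`, while
`W₁(α, 0) = W₁(β, 0) + W₁(α − β, 0)` since `α` is the disjoint union of `β` and `α − β`.
As `W₁(β, 0)` is finite it can be cancelled, which yields both equalities.
-/

lemma pad_emptyDiagram (i : ℕ ⊕ ℕ) : pad emptyDiagram i = none := by
  cases i <;> rfl

lemma W1c_emptyDiagram (d : PtD → PtD → ℝ) (γ : Diagram) :
    W1c d γ emptyDiagram = ∑' i, ENNReal.ofReal (d (pad γ i) none) := by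
  simp only [W1c, pad_emptyDiagram, iInf_const]

lemma W1c_emptyDiagram_eq_tsum {d : PtD → PtD → ℝ} (hΔ : d none none = 0) (γ : Diagram) :
    W1c d γ emptyDiagram = ∑' n, ENNReal.ofReal (d (γ n) none) := by
  rw [W1c_emptyDiagram]
  refine (Sum.inl_injective.tsum_eq ?_).symm
  rintro (n | n) hn
  · exact ⟨n, rfl⟩
  · simp [pad, hΔ] at hn

lemma W1c_emptyDiagram_le_add {d : PtD → PtD → ℝ} (hdtri : ∀ u v w, d u w ≤ d u v + d v w)
    (α β : Diagram) : W1c d α emptyDiagram ≤ W1c d α β + W1c d β emptyDiagram := by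
  rw [W1c_emptyDiagram, W1c_emptyDiagram, W1c, ENNReal.iInf_add]
  refine le_iInf fun e => ?_
  calc ∑' i, ENNReal.ofReal (d (pad α i) none)
      ≤ ∑' i, (ENNReal.ofReal (d (pad α i) (pad β (e i))) +
          ENNReal.ofReal (d (pad β (e i)) none)) :=
        ENNReal.tsum_le_tsum fun i =>
          (ENNReal.ofReal_le_ofReal (hdtri _ _ _)).trans ENNReal.ofReal_add_le
    _ = _ := by rw [ENNReal.tsum_add, e.tsum_eq fun j => ENNReal.ofReal (d (pad β j) none)]

lemma exists_perm_sum_inl_eq {X : Type*} [Countable X] {ι : X → X} {S : Set X}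
    (hinj : S.InjOn ι) : ∃ e : Equiv.Perm (X ⊕ ℕ), ∀ i ∈ S, e (Sum.inl (ι i)) = Sum.inl i := by
  let f : Sum.inl '' S ↪ X ⊕ ℕ :=
    ⟨fun x => Sum.map ι id x.1, by
      rintro ⟨_, i, hi, rfl⟩ ⟨_, j, hj, rfl⟩ h
      obtain rfl := hinj hi hj (Sum.inl_injective h)
      rfl⟩
  -- Both complements below contain every padding index `inr n`, so they are countably
  -- infinite and hence equinumerous, as `Cardinal.extend_function` requires.
  have hinfinite : ∀ s : Set (X ⊕ ℕ), Set.range Sum.inr ⊆ sᶜ → Infinite (sᶜ : Set (X ⊕ ℕ)) :=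
    fun s hs => (Set.infinite_of_injective_forall_mem Sum.inr_injective
      fun n => hs ⟨n, rfl⟩).to_subtype
  have := hinfinite (Sum.inl '' S) (by rintro _ ⟨n, rfl⟩ ⟨i, -, hi⟩; cases hi)
  have := hinfinite (Set.range f) (by rintro _ ⟨n, rfl⟩ ⟨⟨_, i, -, rfl⟩, ⟨⟩⟩)
  obtain ⟨g, hg⟩ := Cardinal.extend_function f inferInstance
  exact ⟨g.symm, fun i hi => g.symm_apply_eq.2 (hg ⟨Sum.inl i, i, hi, rfl⟩).symm⟩

section Submultiset

variable {d : PtD → PtD → ℝ} {α β : Diagram} {ι : ℕ → ℕ}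

lemma W1c_le_W1c_diffDiagram (hdd : ∀ u, d u u = 0) (hinj : Set.InjOn ι {i | β i ≠ none})
    (hsub : ∀ i, β i ≠ none → β i = α (ι i)) :
    W1c d α β ≤ W1c d (diffDiagram α β ι) emptyDiagram := by
  obtain ⟨e, he⟩ := exists_perm_sum_inl_eq hinj
  rw [W1c_emptyDiagram]
  refine iInf_le_of_le e (le_of_eq (tsum_congr fun i => congrArg ENNReal.ofReal ?_))
  by_cases hi : ∃ i₀, β i₀ ≠ none ∧ Sum.inl (ι i₀) = i
  · obtain ⟨i₀, hi₀, rfl⟩ := hi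
    rw [he i₀ hi₀]
    change d (α (ι i₀)) (β i₀) = d (diffDiagram α β ι (ι i₀)) none
    rw [hsub i₀ hi₀, diffDiagram, if_pos ⟨i₀, hi₀, rfl⟩, hdd, hdd]
  · have hβ : pad β (e i) = none := by
      rcases hei : e i with m | n
      · by_contra hm
        exact hi ⟨m, hm, e.injective ((he m hm).trans hei.symm)⟩
      · rfl
    have hα : pad (diffDiagram α β ι) i = pad α i := by
      rcases i with j | n
      · exact if_neg fun ⟨i₀, hi₀, h⟩ => hi ⟨i₀, hi₀, congrArg Sum.inl h⟩
      · rfl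
    rw [hβ, hα]

lemma W1c_emptyDiagram_eq_add_diffDiagram (hΔ : d none none = 0)
    (hinj : Set.InjOn ι {i | β i ≠ none}) (hsub : ∀ i, β i ≠ none → β i = α (ι i)) :
    W1c d α emptyDiagram =
      W1c d β emptyDiagram + W1c d (diffDiagram α β ι) emptyDiagram := by
  set S : Set ℕ := {i | β i ≠ none}
  set f : PtD → ℝ≥0∞ := fun u => ENNReal.ofReal (d u none)
  have hf : f none = 0 := by simp [f, hΔ]
  simp only [W1c_emptyDiagram_eq_tsum hΔ]
  have hsplit : ∀ n, f (α n) = (ι '' S).indicator (f ∘ α) n + f (diffDiagram α β ι n) := by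
    intro n
    by_cases hn : ∃ i, β i ≠ none ∧ ι i = n
    · rw [Set.indicator_of_mem (show n ∈ ι '' S from hn), diffDiagram, if_pos hn, hf,
        add_zero, Function.comp_apply]
    · rw [Set.indicator_of_notMem (show n ∉ ι '' S from hn), diffDiagram, if_neg hn, zero_add]
  have hβ : ∑' n, (ι '' S).indicator (f ∘ α) n = ∑' n, f (β n) :=
    calc ∑' n, (ι '' S).indicator (f ∘ α) n = ∑' i : S, f (α (ι i)) := by
          rw [← tsum_subtype, tsum_image _ hinj]; rfl
      _ = ∑' i : S, f (β i) := tsum_congr fun i => by rw [hsub i i.2]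
      _ = ∑' n, f (β n) := tsum_subtype_eq_of_support_subset (f := fun n => f (β n))
          fun n hn hβn => hn (by simp only [hβn, hf])
  rw [tsum_congr hsplit, ENNReal.tsum_add, hβ]

end Submultiset

theorem stmt14_general (d : PtD → PtD → ℝ)
    (hdeq : ∀ u v : PtD, d u v = 0 ↔ u = v)
    (hdtri : ∀ u v w : PtD, d u w ≤ d u v + d v w)
    (α β : Diagram) (ι : ℕ → ℕ)
    (hinj : Set.InjOn ι {i | β i ≠ none})
    (hsub : ∀ i, β i ≠ none → β i = α (ι i))
    (hβ : W1c d β emptyDiagram < ⊤) :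
    W1c d α β = W1c d (diffDiagram α β ι) emptyDiagram ∧
    W1c d α β = W1c d α emptyDiagram - W1c d β emptyDiagram := by
  have hdd : ∀ u, d u u = 0 := fun u => (hdeq u u).2 rfl
  have hsplit := W1c_emptyDiagram_eq_add_diffDiagram (hdd none) hinj hsub
  have hmain : W1c d α β = W1c d (diffDiagram α β ι) emptyDiagram := by
    refine le_antisymm (W1c_le_W1c_diffDiagram hdd hinj hsub)
      (ENNReal.le_of_add_le_add_left hβ.ne ?_)
    rw [← hsplit, add_comm]
    exact W1c_emptyDiagram_le_add hdtri α β
  refine ⟨hmain, ?_⟩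
  rw [hmain, hsplit, ENNReal.add_sub_cancel_left hβ.ne]

/-- If `β ≤ α` as countable multisets (witnessed by an injection `ι` of the
points of `β` into those of `α`) and both have finite distance to the empty
diagram `0`, then `W₁^d(α, β) = W₁^d(α − β, 0) = W₁^d(α, 0) − W₁^d(β, 0)`. -/
theorem stmt14 (d : PtD → PtD → ℝ)
    (hd0 : ∀ u v : PtD, 0 ≤ d u v)
    (hdsymm : ∀ u v : PtD, d u v = d v u)
    (hdeq : ∀ u v : PtD, d u v = 0 ↔ u = v)
    (hdtri : ∀ u v w : PtD, d u w ≤ d u v + d v w)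
    (α β : Diagram) (ι : ℕ → ℕ)
    (hinj : Set.InjOn ι {i | β i ≠ none})
    (hsub : ∀ i, β i ≠ none → β i = α (ι i))
    (hα : W1c d α emptyDiagram < ⊤) (hβ : W1c d β emptyDiagram < ⊤) :
    W1c d α β = W1c d (diffDiagram α β ι) emptyDiagram ∧
    W1c d α β = W1c d α emptyDiagram - W1c d β emptyDiagram :=
  stmt14_general d hdeq hdtri α β ι hinj hsub hβ

end
end

section
/- Let α^(1), …, α^(N) and β^(1), …, β^(N) be finite signed persistence diagrams such that α := ∑_{k=1}^N α^(k) and β := ∑_{k=1}^N β^(k) are nonnegative (i.e. are finite persistence diagrams). Then ‖Λα − Λβ‖₁ ≤ ∑_{k=1}^N W₁^rk(α^(k), β^(k)). -/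
open scoped Classical ENNReal
open MeasureTheory Filter

noncomputable section

/-- The finite persistence diagram (multiset) underlying the positive part of a
finite signed persistence diagram `σ : Pt →₀ ℤ`: the point `p` occurs with
multiplicity `max(σ(p), 0)`. -/
def posMult (σ : Pt →₀ ℤ) : Multiset Pt :=
  Finsupp.toMultiset (σ.mapRange Int.toNat Int.toNat_zero)

/-- The 1-Wasserstein distance between finite signed persistence diagrams:
`W₁^d(σ, τ) := W₁^d(σ₊ + τ₋, τ₊ + σ₋)`. -/
def W1signed (d : PtD → PtD → ℝ) (σ τ : Pt →₀ ℤ) : ℝ :=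
  W1fin d (posMult σ + posMult (-τ)) (posMult τ + posMult (-σ))


/-!
At each `t` the values `λ_α(k, t)` are the tent values `tent_x(t)`, `x ∈ α`, in decreasing order,
so by the layer-cake formula `∑_k |λ_α(k,t) - λ_β(k,t)|` equals
`∫_{h > 0} |#{x ∈ α | h ≤ tent_x(t)} - #{y ∈ β | h ≤ tent_y(t)}| dh`.
Adding a diagram `γ` to both `α` and `β` leaves this difference of counts unchanged, and a coupling
of `α + γ` with `β + γ` bounds it by the triangle inequality. Integrating in `h` and then in `t`,
a matched pair `(x, y)` contributes `∫ |tent_x - tent_y| = d_rk(x, y) / 2` and an unmatched point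
contributes `∫ tent_x = (x₂ - x₁)² / 4 ≤ d_rk(x, Δ)`.
With `γ = ∑_k (α⁽ᵏ⁾₋ + β⁽ᵏ⁾₋)` we get `α + γ = ∑_k (α⁽ᵏ⁾₊ + β⁽ᵏ⁾₋)` and
`β + γ = ∑_k (β⁽ᵏ⁾₊ + α⁽ᵏ⁾₋)`, so the sum of couplings for the pairs `(α⁽ᵏ⁾, β⁽ᵏ⁾)` is a coupling
of `α + γ` with `β + γ` whose cost is the sum of their costs.
-/

open Set

lemma le_sum_sInf {ι : Type*} (s : Finset ι) {S : ι → Set ℝ} (hS : ∀ i, (S i).Nonempty) {a : ℝ}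
    (h : ∀ c : ι → ℝ, (∀ i, c i ∈ S i) → a ≤ ∑ i ∈ s, c i) : a ≤ ∑ i ∈ s, sInf (S i) := by
  classical
  induction s using Finset.induction_on generalizing a with
  | empty => simpa using h (fun i => (hS i).some) fun i => (hS i).some_mem
  | insert j s hj ih =>
    rw [Finset.sum_insert hj, ← sub_le_iff_le_add]
    refine le_csInf (hS j) fun x hx => ?_
    rw [sub_le_comm]
    refine ih fun c hc => ?_
    have hupd := h (Function.update c j x) fun i => by
      rcases eq_or_ne i j with rfl | hij
      · simpa using hx
      · simpa [hij] using hc i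
    rw [Finset.sum_insert hj, Function.update_self, Finset.sum_congr rfl fun i hi =>
      Function.update_of_ne (ne_of_mem_of_not_mem hi hj) _ _] at hupd
    linarith

section Coupling

variable {d d' : PtD → PtD → ℝ}

lemma cost_mono (h : ∀ a b, d a b ≤ d' a b) (α β : Multiset Pt) (m : Multiset (Pt × Pt)) :
    cost d α β m ≤ cost d' α β m := by
  unfold cost
  gcongr <;> exact Multiset.sum_map_le_sum_map _ _ fun _ _ => h _ _

lemma cost_add_s18 {α₁ α₂ β₁ β₂ : Multiset Pt} {m₁ m₂ : Multiset (Pt × Pt)}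
    (hα₁ : m₁.map Prod.fst ≤ α₁) (hα₂ : m₂.map Prod.fst ≤ α₂)
    (hβ₁ : m₁.map Prod.snd ≤ β₁) (hβ₂ : m₂.map Prod.snd ≤ β₂) :
    cost d (α₁ + α₂) (β₁ + β₂) (m₁ + m₂) = cost d α₁ β₁ m₁ + cost d α₂ β₂ m₂ := by
  simp only [cost, Multiset.map_add, ← tsub_add_tsub_comm hα₁ hα₂, ← tsub_add_tsub_comm hβ₁ hβ₂,
    Multiset.sum_add]
  ring

lemma Multiset.map_finsetSum {ι α β : Type*} (s : Finset ι) (m : ι → Multiset α) (f : α → β) :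
    (∑ i ∈ s, m i).map f = ∑ i ∈ s, (m i).map f :=
  map_sum (Multiset.mapAddMonoidHom f) m s

lemma cost_sum {ι : Type*} (s : Finset ι) (α β : ι → Multiset Pt) (m : ι → Multiset (Pt × Pt))
    (hα : ∀ i, (m i).map Prod.fst ≤ α i) (hβ : ∀ i, (m i).map Prod.snd ≤ β i) :
    cost d (∑ i ∈ s, α i) (∑ i ∈ s, β i) (∑ i ∈ s, m i) = ∑ i ∈ s, cost d (α i) (β i) (m i) := by
  classical
  induction s using Finset.cons_induction with
  | empty => simp [cost]
  | cons j s hj ih =>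
    simp only [Finset.sum_cons, ← ih]
    refine cost_add_s18 (hα j) ?_ (hβ j) ?_
    · rw [Multiset.map_finsetSum]; exact Finset.sum_le_sum fun i _ => hα i
    · rw [Multiset.map_finsetSum]; exact Finset.sum_le_sum fun i _ => hβ i

lemma abs_sum_sub_sum_le_cost (F : PtD → ℝ) (hF : F none = 0) {α β γ : Multiset Pt}
    {m : Multiset (Pt × Pt)} (hα : m.map Prod.fst ≤ α + γ) (hβ : m.map Prod.snd ≤ β + γ) :
    |(α.map fun x => F (some x)).sum - (β.map fun y => F (some y)).sum| ≤
      cost (fun a b => |F a - F b|) (α + γ) (β + γ) m := by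
  have split : ∀ (X : Multiset Pt) (g : Pt × Pt → Pt), m.map g ≤ X →
      (X.map fun x => F (some x)).sum =
        (m.map fun p => F (some (g p))).sum + ((X - m.map g).map fun x => F (some x)).sum := by
    intro X g hX
    conv_lhs => rw [← add_tsub_cancel_of_le hX]
    rw [Multiset.map_add, Multiset.sum_add, Multiset.map_map]
    rfl
  have hdiff : (α.map fun x => F (some x)).sum - (β.map fun y => F (some y)).sum =
      (m.map fun p => F (some p.1) - F (some p.2)).sum
        + ((α + γ - m.map Prod.fst).map fun x => F (some x)).sum
        - ((β + γ - m.map Prod.snd).map fun y => F (some y)).sum := by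
    have h₁ := split _ _ hα
    have h₂ := split _ _ hβ
    simp only [Multiset.map_add, Multiset.sum_add, Multiset.sum_map_sub] at h₁ h₂ ⊢
    linarith
  rw [hdiff]
  simp only [cost, hF, sub_zero, zero_sub, abs_neg]
  refine (abs_sub _ _).trans (add_le_add ((abs_add_le _ _).trans (add_le_add ?_ ?_)) ?_) <;>
    exact Multiset.abs_sum_le_sum_abs.trans_eq (by rw [Multiset.map_map]; rfl)

end Coupling

section Integration

variable {Ω E : Type*} [MeasurableSpace Ω] {μ : Measure Ω} [NormedAddCommGroup E]

lemma integrable_multiset_sum_map {ι : Type*} (s : Multiset ι) {f : ι → Ω → E}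
    (hf : ∀ i ∈ s, Integrable (f i) μ) : Integrable (fun ω => (s.map fun i => f i ω).sum) μ := by
  induction s using Multiset.induction_on with
  | empty => simp
  | cons j s ih =>
    simp only [Multiset.map_cons, Multiset.sum_cons]
    exact (hf j (Multiset.mem_cons_self j s)).add
      (ih fun i hi => hf i (Multiset.mem_cons_of_mem hi))

lemma integral_multiset_sum_map [NormedSpace ℝ E] {ι : Type*} (s : Multiset ι) {f : ι → Ω → E}
    (hf : ∀ i ∈ s, Integrable (f i) μ) :
    ∫ ω, (s.map fun i => f i ω).sum ∂μ = (s.map fun i => ∫ ω, f i ω ∂μ).sum := by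
  induction s using Multiset.induction_on with
  | empty => simp
  | cons j s ih =>
    have hs : ∀ i ∈ s, Integrable (f i) μ := fun i hi => hf i (Multiset.mem_cons_of_mem hi)
    simp only [Multiset.map_cons, Multiset.sum_cons]
    rw [integral_add (hf j (Multiset.mem_cons_self j s)) (integrable_multiset_sum_map s hs), ih hs]

variable (d : Ω → PtD → PtD → ℝ) (α β : Multiset Pt) (m : Multiset (Pt × Pt))

lemma integrable_cost (hd : ∀ a b, Integrable (fun ω => d ω a b) μ) :
    Integrable (fun ω => cost (d ω) α β m) μ :=
  ((integrable_multiset_sum_map _ fun _ _ => hd _ _).add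
    (integrable_multiset_sum_map _ fun _ _ => hd _ _)).add
    (integrable_multiset_sum_map _ fun _ _ => hd _ _)

lemma integral_cost (hd : ∀ a b, Integrable (fun ω => d ω a b) μ) :
    ∫ ω, cost (d ω) α β m ∂μ = cost (fun a b => ∫ ω, d ω a b ∂μ) α β m := by
  have h₁ := integrable_multiset_sum_map (μ := μ) m (f := fun p ω => d ω (some p.1) (some p.2))
    fun _ _ => hd _ _
  have h₂ := integrable_multiset_sum_map (μ := μ) (α - m.map Prod.fst)
    (f := fun x ω => d ω (some x) none) fun _ _ => hd _ _
  have h₃ := integrable_multiset_sum_map (μ := μ) (β - m.map Prod.snd)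
    (f := fun y ω => d ω none (some y)) fun _ _ => hd _ _
  unfold cost
  rw [integral_add ?_ h₃, integral_add h₁ h₂, integral_multiset_sum_map _ fun _ _ => hd _ _,
    integral_multiset_sum_map _ fun _ _ => hd _ _, integral_multiset_sum_map _ fun _ _ => hd _ _]
  exact h₁.add h₂

end Integration

def layer (v : ℝ) : ℝ → ℝ := (Ioc 0 v).indicator 1

lemma layer_zero : layer 0 = 0 := by ext; simp [layer]

lemma layer_apply_of_pos {v h : ℝ} (hh : 0 < h) : layer v h = if h ≤ v then 1 else 0 := by
  simp [layer, indicator, hh]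

lemma layer_apply_of_nonpos (v : ℝ) {h : ℝ} (hh : h ≤ 0) : layer v h = 0 := by
  simp [layer, indicator, hh.not_gt]

lemma layer_mono {a b : ℝ} (hab : a ≤ b) (h : ℝ) : layer a h ≤ layer b h :=
  indicator_le_indicator_of_subset (Ioc_subset_Ioc_right hab) (fun _ => zero_le_one) h

lemma integrable_layer (v : ℝ) : Integrable (layer v) :=
  (integrable_indicator_iff measurableSet_Ioc).2 (integrableOn_const measure_Ioc_lt_top.ne)

lemma integral_layer {v : ℝ} (hv : 0 ≤ v) : ∫ h, layer v h = v := by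
  rw [layer, integral_indicator_one measurableSet_Ioc, Real.volume_real_Ioc_of_le hv, sub_zero]

lemma integral_abs_layer_sub {a b : ℝ} (ha : 0 ≤ a) (hb : 0 ≤ b) :
    ∫ h, |layer a h - layer b h| = |a - b| := by
  have habs : ∀ h, |layer a h - layer b h| = layer (max a b) h - layer (min a b) h := by
    intro h
    rcases le_total a b with hab | hab
    · rw [abs_of_nonpos (sub_nonpos.2 (layer_mono hab h)), max_eq_right hab, min_eq_left hab,
        neg_sub]
    · rw [abs_of_nonneg (sub_nonneg.2 (layer_mono hab h)), max_eq_left hab, min_eq_right hab]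
  simp_rw [habs]
  rw [integral_sub (integrable_layer _) (integrable_layer _), integral_layer (le_max_of_le_left ha),
    integral_layer (le_min ha hb), max_sub_min_eq_abs, abs_sub_comm]

/-- Unlike `tent`, defined for every pair `a, b`, so that the minimum of two tents is again one
(`min_intervalTent`). -/
def intervalTent (a b t : ℝ) : ℝ := max 0 (min (t - a) (b - t))

lemma tent_eq_intervalTent (x : Pt) : tent x = intervalTent x.1.1 x.1.2 := rfl

lemma continuous_intervalTent (a b : ℝ) : Continuous (intervalTent a b) := by
  unfold intervalTent; fun_prop

lemma intervalTent_eq_zero {a b t : ℝ} (ht : t ∉ Icc a b) : intervalTent a b t = 0 := by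
  rw [mem_Icc, not_and_or, not_le, not_le] at ht
  refine max_eq_left ?_
  rcases ht with ht | ht
  · exact min_le_of_left_le (by linarith)
  · exact min_le_of_right_le (by linarith)

lemma intervalTent_eq_zero_of_le {a b : ℝ} (hba : b ≤ a) (t : ℝ) : intervalTent a b t = 0 := by
  refine max_eq_left ?_
  rcases le_total t a with ht | ht
  · exact min_le_of_left_le (by linarith)
  · exact min_le_of_right_le (by linarith)

lemma integrable_intervalTent (a b : ℝ) : Integrable (intervalTent a b) :=
  (continuous_intervalTent a b).integrable_of_hasCompactSupport
    (HasCompactSupport.intro isCompact_Icc fun _ => intervalTent_eq_zero)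

lemma integral_intervalTent (a b : ℝ) : ∫ t, intervalTent a b t = (max (b - a) 0) ^ 2 / 4 := by
  rcases le_or_gt b a with hba | hab
  · simp [intervalTent_eq_zero_of_le hba, max_eq_right (sub_nonpos.2 hba)]
  set c := (a + b) / 2 with hc
  have hint : ∀ u v, IntervalIntegrable (intervalTent a b) volume u v :=
    fun _ _ => (integrable_intervalTent a b).intervalIntegrable
  have hleft : ∫ t in a..c, intervalTent a b t = ∫ t in a..c, (t - a) := by
    refine intervalIntegral.integral_congr fun t ht => ?_
    rw [uIcc_of_le (by linarith [hc]), mem_Icc] at ht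
    rw [intervalTent, min_eq_left (by linarith [hc]), max_eq_right (by linarith [hc])]
  have hright : ∫ t in c..b, intervalTent a b t = ∫ t in c..b, (b - t) := by
    refine intervalIntegral.integral_congr fun t ht => ?_
    rw [uIcc_of_le (by linarith [hc]), mem_Icc] at ht
    rw [intervalTent, min_eq_right (by linarith [hc]), max_eq_right (by linarith [hc])]
  calc ∫ t, intervalTent a b t = ∫ t in a..b, intervalTent a b t := by
        rw [intervalIntegral.integral_of_le hab.le, ← integral_Icc_eq_integral_Ioc,
          setIntegral_eq_integral_of_forall_compl_eq_zero fun t ht => intervalTent_eq_zero ht]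
    _ = (∫ t in a..c, (t - a)) + ∫ t in c..b, (b - t) := by
        rw [← intervalIntegral.integral_add_adjacent_intervals (hint a c) (hint c b), hleft, hright]
    _ = (max (b - a) 0) ^ 2 / 4 := by
        rw [intervalIntegral.integral_sub intervalIntegrable_const
          intervalIntegral.intervalIntegrable_id]
        simp [max_eq_left (sub_nonneg.2 hab.le), hc]
        ring

lemma integral_tent (x : Pt) : ∫ t, tent x t = (x.1.2 - x.1.1) ^ 2 / 4 := by
  rw [tent_eq_intervalTent, integral_intervalTent, max_eq_left (sub_nonneg.2 x.2.le)]

lemma min_intervalTent (a b c d t : ℝ) :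
    min (intervalTent a b t) (intervalTent c d t) = intervalTent (max a c) (min b d) t := by
  unfold intervalTent
  rw [← max_min_distrib_left, min_min_min_comm]
  congr 2
  · rcases le_total a c with h | h
    · rw [max_eq_right h, min_eq_right (by linarith)]
    · rw [max_eq_left h, min_eq_left (by linarith)]
  · rcases le_total b d with h | h
    · rw [min_eq_left h, min_eq_left (by linarith)]
    · rw [min_eq_right h, min_eq_right (by linarith)]

def tentQ : PtD → ℝ → ℝ
  | some x => tent x
  | none => 0

lemma tent_nonneg (x : Pt) (t : ℝ) : 0 ≤ tent x t := le_max_left _ _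

lemma tentQ_nonneg (a : PtD) (t : ℝ) : 0 ≤ tentQ a t := by
  cases a
  · exact le_rfl
  · exact tent_nonneg _ t

lemma integrable_tent (x : Pt) : Integrable (tent x) := integrable_intervalTent _ _

lemma integrable_tentQ (a : PtD) : Integrable (tentQ a) := by
  cases a
  · exact integrable_zero _ _ _
  · exact integrable_tent _

lemma integral_abs_tent_sub (x y : Pt) : ∫ t, |tent x t - tent y t| = drk x.1 y.1 / 2 := by
  have habs : ∀ t, |tent x t - tent y t| =
      tent x t + tent y t - 2 * intervalTent (max x.1.1 y.1.1) (min x.1.2 y.1.2) t := by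
    intro t
    rw [tent_eq_intervalTent, tent_eq_intervalTent, ← min_intervalTent]
    rcases le_total (intervalTent x.1.1 x.1.2 t) (intervalTent y.1.1 y.1.2 t) with h | h
    · rw [abs_of_nonpos (by linarith), min_eq_left h]; ring
    · rw [abs_of_nonneg (by linarith), min_eq_right h]; ring
  simp_rw [habs]
  rw [integral_sub (f := fun t => tent x t + tent y t) ((integrable_tent x).add (integrable_tent y))
      ((integrable_intervalTent _ _).const_mul 2),
    integral_add (integrable_tent x) (integrable_tent y), integral_const_mul,
    integral_tent, integral_tent, integral_intervalTent, drk]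
  ring

lemma integral_abs_tentQ_sub_le_drkQ (a b : PtD) : ∫ t, |tentQ a t - tentQ b t| ≤ drkQ a b := by
  have hdiag : ∀ x : Pt, (x.1.2 - x.1.1) ^ 2 / 4 ≤ (x.1.2 - x.1.1) ^ 2 / 2 := fun x => by
    nlinarith [sq_nonneg (x.1.2 - x.1.1)]
  cases a <;> cases b
  · simp [tentQ, drkQ]
  · simpa [tentQ, drkQ, abs_of_nonneg (tent_nonneg _ _), integral_tent] using hdiag _
  · simpa [tentQ, drkQ, abs_of_nonneg (tent_nonneg _ _), integral_tent] using hdiag _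
  · rename_i x y
    have hxy := integral_abs_tent_sub x y
    have hnonneg : 0 ≤ ∫ t, |tent x t - tent y t| := integral_nonneg fun _ => abs_nonneg _
    simp only [tentQ, drkQ]
    linarith

section Landscape

variable (X : Multiset Pt)

lemma landscape_nonneg (k : ℕ) (t : ℝ) : 0 ≤ landscape X k t :=
  Real.sSup_nonneg fun _ hh => hh.1.le

lemma landscape_eq_zero_of_card_lt {k : ℕ} (hk : Multiset.card X < k) (t : ℝ) :
    landscape X k t = 0 := by
  rw [landscape]
  convert Real.sSup_empty
  refine eq_empty_of_forall_notMem fun h hh => ?_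
  exact (hh.2.trans (Multiset.card_le_card (Multiset.filter_le _ _))).not_gt hk

lemma le_landscape_iff {k : ℕ} (hk : 0 < k) {t h : ℝ} (hh : 0 < h) :
    h ≤ landscape X k t ↔ k ≤ Multiset.card (X.filter fun x => h ≤ tent x t) := by
  constructor
  · intro hle
    by_contra! hlt
    -- No tent value lies in `(w, h)`, so every level above `w` counts at most the points
    -- counted at level `h`.
    set w := (X.toFinset.filter fun x => tent x t < h).fold max 0 (tent · t)
    have hw : 0 ≤ w := (Finset.le_fold_max _).2 (Or.inl le_rfl)
    have hwh : w < h := (Finset.fold_max_lt _).2 ⟨hh, fun x hx => (Finset.mem_filter.1 hx).2⟩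
    have hgap : ∀ x ∈ X, w < tent x t → h ≤ tent x t := fun x hx hwx => by
      by_contra! hxh
      exact hwx.not_ge ((Finset.le_fold_max _).2
        (Or.inr ⟨x, Finset.mem_filter.2 ⟨Multiset.mem_toFinset.2 hx, hxh⟩, le_rfl⟩))
    refine hwh.not_ge (hle.trans (Real.sSup_le (fun e ⟨_, hek⟩ => ?_) hw))
    by_contra! hwe
    refine hlt.not_ge (hek.trans (Multiset.card_le_card ?_))
    calc X.filter (fun x => e ≤ tent x t) = X.filter fun x => e ≤ tent x t ∧ h ≤ tent x t :=
          Multiset.filter_congr fun x hx =>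
            ⟨fun hex => ⟨hex, hgap x hx (hwe.trans_le hex)⟩, And.left⟩
      _ ≤ X.filter fun x => h ≤ tent x t := Multiset.monotone_filter_right X fun _ => And.right
  · intro hcard
    refine le_csSup ⟨X.toFinset.fold max 0 (tent · t), ?_⟩ ⟨hh, hcard⟩
    rintro e ⟨_, hek⟩
    obtain ⟨x, hx⟩ := Multiset.card_pos_iff_exists_mem.1 (hk.trans_le hek)
    rw [Multiset.mem_filter] at hx
    exact (Finset.le_fold_max _).2 (Or.inr ⟨x, Multiset.mem_toFinset.2 hx.1, hx.2⟩)

lemma card_filter_eq_sum_layer (t : ℝ) {h : ℝ} (hh : 0 < h) :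
    (Multiset.card (X.filter fun x => h ≤ tent x t) : ℝ) =
      (X.map fun x => layer (tent x t) h).sum := by
  induction X using Multiset.induction_on with
  | empty => simp
  | cons x X ih =>
    rw [Multiset.filter_cons, Multiset.map_cons, Multiset.sum_cons, ← ih, layer_apply_of_pos hh]
    split_ifs <;> simp [add_comm]

lemma measurable_landscape {k : ℕ} (hk : 0 < k) : Measurable (landscape X k) := by
  refine measurable_of_Ici fun h => ?_
  rcases le_or_gt h 0 with hh | hh
  · convert MeasurableSet.univ
    exact eq_univ_of_forall fun t => hh.trans (landscape_nonneg X k t)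
  · have hpre : landscape X k ⁻¹' Ici h =
        {t | (k : ℝ) ≤ (X.map fun x => layer (tent x t) h).sum} := by
      ext t
      change h ≤ landscape X k t ↔ (k : ℝ) ≤ _
      rw [le_landscape_iff X hk hh, ← card_filter_eq_sum_layer X t hh, Nat.cast_le]
    have hlayer : ∀ x, Measurable fun t => layer (tent x t) h := fun x => by
      simp only [layer_apply_of_pos hh]
      exact Measurable.ite
        (measurableSet_le measurable_const (continuous_intervalTent _ _).measurable)
        measurable_const measurable_const
    rw [hpre]
    refine measurableSet_le measurable_const ?_
    simpa only [Multiset.map_map, Function.comp_def] using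
      Multiset.measurable_fun_sum (X.map fun x t => layer (tent x t) h) fun f hf => by
        obtain ⟨x, -, rfl⟩ := Multiset.mem_map.1 hf
        exact hlayer x

lemma layer_landscape (k : ℕ) (t : ℝ) {h : ℝ} (hh : 0 < h) :
    layer (landscape X (k + 1) t) h =
      if k < Multiset.card (X.filter fun x => h ≤ tent x t) then 1 else 0 := by
  rw [layer_apply_of_pos hh]
  exact if_congr ((le_landscape_iff X k.succ_pos hh).trans Nat.succ_le_iff) rfl rfl

end Landscape

lemma sum_range_abs_sub_ite_lt {K n₁ n₂ : ℕ} (h₁ : n₁ ≤ K) (h₂ : n₂ ≤ K) :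
    ∑ k ∈ Finset.range K, |(if k < n₁ then 1 else 0 : ℝ) - (if k < n₂ then 1 else 0)| =
      |(n₁ : ℝ) - n₂| := by
  have hcount : ∀ n ≤ K, ∑ k ∈ Finset.range K, (if k < n then 1 else 0 : ℝ) = n := fun n hn => by
    rw [Finset.sum_boole, show (Finset.range K).filter (· < n) = Finset.range n by
      ext; simp only [Finset.mem_filter, Finset.mem_range]; omega, Finset.card_range]
  have hterm : ∀ k : ℕ, |(if k < n₁ then 1 else 0 : ℝ) - (if k < n₂ then 1 else 0)| =
      (if k < max n₁ n₂ then 1 else 0 : ℝ) - (if k < min n₁ n₂ then 1 else 0) := fun k => by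
    by_cases hk₁ : k < n₁ <;> by_cases hk₂ : k < n₂ <;> simp [hk₁, hk₂]
  rw [Finset.sum_congr rfl fun k _ => hterm k, Finset.sum_sub_distrib, hcount _ (max_le h₁ h₂),
    hcount _ ((min_le_left _ _).trans h₁), Nat.cast_max, Nat.cast_min, max_sub_min_eq_abs,
    abs_sub_comm]

lemma sum_abs_landscape_sub_eq_integral {α β : Multiset Pt} {K : ℕ}
    (hα : Multiset.card α ≤ K) (hβ : Multiset.card β ≤ K) (t : ℝ) :
    ∑ k ∈ Finset.range K, |landscape α (k + 1) t - landscape β (k + 1) t| =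
      ∫ h, |(α.map fun x => layer (tent x t) h).sum - (β.map fun y => layer (tent y t) h).sum| := by
  calc _ = ∑ k ∈ Finset.range K,
        ∫ h, |layer (landscape α (k + 1) t) h - layer (landscape β (k + 1) t) h| :=
        Finset.sum_congr rfl fun k _ =>
          (integral_abs_layer_sub (landscape_nonneg _ _ _) (landscape_nonneg _ _ _)).symm
    _ = ∫ h, ∑ k ∈ Finset.range K,
        |layer (landscape α (k + 1) t) h - layer (landscape β (k + 1) t) h| :=
        (integral_finsetSum _ fun k _ => ((integrable_layer _).sub (integrable_layer _)).abs).symm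
    _ = _ := integral_congr_ae (ae_of_all _ fun h => ?_)
  rcases le_or_gt h 0 with hh | hh
  · simp [layer_apply_of_nonpos _ hh]
  · simp only [layer_landscape _ _ _ hh, ← card_filter_eq_sum_layer _ t hh]
    exact sum_range_abs_sub_ite_lt ((Multiset.card_le_card (Multiset.filter_le _ _)).trans hα)
      ((Multiset.card_le_card (Multiset.filter_le _ _)).trans hβ)

lemma sum_abs_landscape_sub_le_cost {α β γ : Multiset Pt} {m : Multiset (Pt × Pt)}
    (hmα : m.map Prod.fst ≤ α + γ) (hmβ : m.map Prod.snd ≤ β + γ) {K : ℕ}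
    (hα : Multiset.card α ≤ K) (hβ : Multiset.card β ≤ K) (t : ℝ) :
    ∑ k ∈ Finset.range K, |landscape α (k + 1) t - landscape β (k + 1) t| ≤
      cost (fun a b => |tentQ a t - tentQ b t|) (α + γ) (β + γ) m := by
  let d : ℝ → PtD → PtD → ℝ := fun h a b => |layer (tentQ a t) h - layer (tentQ b t) h|
  have hd : ∀ a b, Integrable fun h => d h a b := fun a b =>
    ((integrable_layer _).sub (integrable_layer _)).abs
  calc _ = ∫ h, |(α.map fun x => layer (tent x t) h).sum -
        (β.map fun y => layer (tent y t) h).sum| :=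
        sum_abs_landscape_sub_eq_integral hα hβ t
    _ ≤ ∫ h, cost (d h) (α + γ) (β + γ) m :=
        integral_mono_of_nonneg (ae_of_all _ fun _ => abs_nonneg _) (integrable_cost d _ _ _ hd)
          (ae_of_all _ fun h => abs_sum_sub_sum_le_cost (fun a => layer (tentQ a t) h)
            (by simp [tentQ, layer_zero]) hmα hmβ)
    _ = cost (fun a b => ∫ h, d h a b) (α + γ) (β + γ) m := integral_cost d _ _ _ hd
    _ = _ := by
        congr
        funext a b
        exact integral_abs_layer_sub (tentQ_nonneg a t) (tentQ_nonneg b t)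

lemma lambdaDistFin_le_cost (α β γ : Multiset Pt) {m : Multiset (Pt × Pt)}
    (hmα : m.map Prod.fst ≤ α + γ) (hmβ : m.map Prod.snd ≤ β + γ) :
    lambdaDistFin α β ≤ cost drkQ (α + γ) (β + γ) m := by
  set K := max (Multiset.card α) (Multiset.card β)
  set f : ℕ → ℝ → ℝ := fun k t => |landscape α (k + 1) t - landscape β (k + 1) t|
  set g : ℝ → ℝ := fun t => cost (fun a b => |tentQ a t - tentQ b t|) (α + γ) (β + γ) m
  have hg : Integrable g :=
    integrable_cost _ _ _ _ fun a b => ((integrable_tentQ a).sub (integrable_tentQ b)).abs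
  have hfg : ∀ t, ∑ k ∈ Finset.range K, f k t ≤ g t :=
    sum_abs_landscape_sub_le_cost hmα hmβ (le_max_left _ _) (le_max_right _ _)
  have hf : ∀ k ∈ Finset.range K, Integrable (f k) := fun k hk =>
    hg.mono' ((measurable_landscape α k.succ_pos).sub
      (measurable_landscape β k.succ_pos)).abs.aestronglyMeasurable <| ae_of_all _ fun t => by
        rw [Real.norm_eq_abs, abs_abs]
        exact (Finset.single_le_sum (fun k _ => abs_nonneg _) hk).trans (hfg t)
  have hvanish : ∀ k ∉ Finset.range K, ∫ t, f k t = 0 := fun k hk => by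
    have hK : K < k + 1 := by rw [Finset.mem_range, not_lt] at hk; omega
    simp [f, landscape_eq_zero_of_card_lt _ ((le_max_left _ _).trans_lt hK),
      landscape_eq_zero_of_card_lt _ ((le_max_right _ _).trans_lt hK)]
  calc lambdaDistFin α β = ∑ k ∈ Finset.range K, ∫ t, f k t := tsum_eq_sum hvanish
    _ = ∫ t, ∑ k ∈ Finset.range K, f k t := (integral_finsetSum _ hf).symm
    _ ≤ ∫ t, g t := integral_mono (integrable_finsetSum _ hf) hg hfg
    _ = cost (fun a b => ∫ t, |tentQ a t - tentQ b t|) (α + γ) (β + γ) m :=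
        integral_cost _ _ _ _ fun a b => ((integrable_tentQ a).sub (integrable_tentQ b)).abs
    _ ≤ cost drkQ (α + γ) (β + γ) m := cost_mono integral_abs_tentQ_sub_le_drkQ _ _ _

lemma count_posMult (σ : Pt →₀ ℤ) (p : Pt) : (posMult σ).count p = (σ p).toNat := by
  rw [posMult, Finsupp.count_toMultiset, Finsupp.mapRange_apply]

lemma posMult_sum_add_sum_posMult_neg {ι : Type*} (s : Finset ι) (σ : ι → Pt →₀ ℤ)
    (hσ : ∀ p, 0 ≤ (∑ i ∈ s, σ i) p) :
    posMult (∑ i ∈ s, σ i) + ∑ i ∈ s, posMult (-σ i) = ∑ i ∈ s, posMult (σ i) := by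
  classical
  ext p
  have hp := hσ p
  rw [Finsupp.finsetSum_apply] at hp
  simp only [Multiset.count_add, Multiset.count_sum', count_posMult, Finsupp.finsetSum_apply,
    Finsupp.neg_apply]
  zify
  rw [Int.toNat_of_nonneg hp, ← Finset.sum_add_distrib]
  exact Finset.sum_congr rfl fun i _ => by omega

lemma lambdaDistFin_le_sum_cost {ι : Type*} (s : Finset ι) (σ τ : ι → Pt →₀ ℤ)
    (hσ : ∀ p, 0 ≤ (∑ i ∈ s, σ i) p) (hτ : ∀ p, 0 ≤ (∑ i ∈ s, τ i) p)
    (m : ι → Multiset (Pt × Pt))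
    (hmσ : ∀ i, (m i).map Prod.fst ≤ posMult (σ i) + posMult (-τ i))
    (hmτ : ∀ i, (m i).map Prod.snd ≤ posMult (τ i) + posMult (-σ i)) :
    lambdaDistFin (posMult (∑ i ∈ s, σ i)) (posMult (∑ i ∈ s, τ i)) ≤
      ∑ i ∈ s,
        cost drkQ (posMult (σ i) + posMult (-τ i)) (posMult (τ i) + posMult (-σ i)) (m i) := by
  set γ := ∑ i ∈ s, posMult (-σ i) + ∑ i ∈ s, posMult (-τ i)
  have hσγ : posMult (∑ i ∈ s, σ i) + γ = ∑ i ∈ s, (posMult (σ i) + posMult (-τ i)) := by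
    rw [Finset.sum_add_distrib, ← posMult_sum_add_sum_posMult_neg s σ hσ, add_assoc]
  have hτγ : posMult (∑ i ∈ s, τ i) + γ = ∑ i ∈ s, (posMult (τ i) + posMult (-σ i)) := by
    rw [Finset.sum_add_distrib, ← posMult_sum_add_sum_posMult_neg s τ hτ, add_assoc,
      add_comm (∑ i ∈ s, posMult (-τ i))]
  rw [← cost_sum s _ _ m hmσ hmτ, ← hσγ, ← hτγ]
  refine lambdaDistFin_le_cost _ _ γ ?_ ?_
  · rw [hσγ, Multiset.map_finsetSum]; exact Finset.sum_le_sum fun i _ => hmσ i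
  · rw [hτγ, Multiset.map_finsetSum]; exact Finset.sum_le_sum fun i _ => hmτ i

/-- If the finite signed diagrams `α⁽¹⁾,…,α⁽ᴺ⁾` and `β⁽¹⁾,…,β⁽ᴺ⁾` sum to
nonnegative persistence diagrams `α` and `β`, then
`‖Λα − Λβ‖₁ ≤ ∑_k W₁^rk(α⁽ᵏ⁾, β⁽ᵏ⁾)`. -/
theorem stmt18 (N : ℕ) (A B : Fin N → (Pt →₀ ℤ))
    (hA : ∀ p : Pt, 0 ≤ (∑ k, A k) p) (hB : ∀ p : Pt, 0 ≤ (∑ k, B k) p) :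
    lambdaDistFin (posMult (∑ k, A k)) (posMult (∑ k, B k)) ≤
      ∑ k, W1signed drkQ (A k) (B k) := by
  apply le_sum_sInf
  · exact fun k => ⟨_, 0, by simp, by simp, rfl⟩
  intro c hc
  choose m hmA hmB hc using hc
  simp only [hc]
  exact lambdaDistFin_le_sum_cost _ A B hA hB m hmA hmB

end
end
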